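/- arXiv:1509.05881 — 6 statements merged into one kernel-verified Lean document; each statement's English description precedes it below -/
import Mathlib

section
/- Along any trajectory of the controlled HKB end-effector model with the given adaptive laws, and with the reference position affine in time with slope v on an interval I, the energy-like function E(t) = ½[(x(t) − r̂(t))² + (y(t) − v)² + e^{2a(t)} + e^{2b(t)}] satisfies E′(t) = −2 η_a E(t) for every t in I, regardless of the choice of the continuous input u. -/
/-! In the error coordinates `p = x − r̂`, `q = y − v` one has `ṗ = q`, and the adaptive laws are
chosen so that `e^{2a} ȧ` and `e^{2b} ḃ` cancel the cross term `p q` and the (input-dependent)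
term `q q̇` of `Ė`, leaving only the damping `−ηₐ` contributed by every summand of `E`. -/

open Real

theorem hasDerivAt_exp_two_mul {a : ℝ → ℝ} {a' t : ℝ} (ha : HasDerivAt a a' t) :
    HasDerivAt (fun s => exp (2 * a s)) (2 * exp (2 * a t) * a') t := by
  convert (ha.const_mul 2).exp using 1; ring

theorem hasDerivAt_energy_of_adaptive_laws {p q a b : ℝ → ℝ} {q' η t : ℝ}
    (hp : HasDerivAt p (q t) t) (hq : HasDerivAt q q' t)
    (ha : HasDerivAt a (-exp (-2 * a t) * (p t * q t + η * p t ^ 2) - η) t)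
    (hb : HasDerivAt b (exp (-2 * b t) * q t * (-q' - η * q t) - η) t) :
    HasDerivAt (fun s => 1 / 2 * (p s ^ 2 + q s ^ 2 + exp (2 * a s) + exp (2 * b s)))
      (-2 * η * (1 / 2 * (p t ^ 2 + q t ^ 2 + exp (2 * a t) + exp (2 * b t)))) t := by
  have hE := ((((hp.fun_pow 2).add (hq.fun_pow 2)).add
    (hasDerivAt_exp_two_mul ha)).add (hasDerivAt_exp_two_mul hb)).const_mul (1 / 2 : ℝ)
  refine hE.congr_deriv ?_
  have exp_a : exp (2 * a t) * exp (-2 * a t) = 1 := by rw [← exp_add]; simp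
  have exp_b : exp (2 * b t) * exp (-2 * b t) = 1 := by rw [← exp_add]; simp
  linear_combination (-(p t * q t + η * p t ^ 2)) * exp_a + (q t * (-q' - η * q t)) * exp_b

theorem adaptive_energy_derivative_identity_general
    (α β γ ω ηa v r₀ t₀ : ℝ) (I : Set ℝ)
    (u x y a b : ℝ → ℝ)
    (hx : ∀ t ∈ I, HasDerivAt x (y t) t)
    (hy : ∀ t ∈ I, HasDerivAt y
      (-(α * (y t) ^ 2 + β * (x t) ^ 2 - γ) * y t - ω ^ 2 * x t + u t) t)
    (ha : ∀ t ∈ I, HasDerivAt a (-Real.exp (-2 * a t) *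
      ((x t - (r₀ + v * (t - t₀))) * (y t - v)
        + ηa * (x t - (r₀ + v * (t - t₀))) ^ 2) - ηa) t)
    (hb : ∀ t ∈ I, HasDerivAt b (Real.exp (-2 * b t) * (y t - v) *
      (ω ^ 2 * x t + (α * (y t) ^ 2 + β * (x t) ^ 2 - γ) * y t
        - ηa * (y t - v) - u t) - ηa) t) :
    ∀ t ∈ I, HasDerivAt
      (fun s => (1 / 2) * ((x s - (r₀ + v * (s - t₀))) ^ 2 + (y s - v) ^ 2
        + Real.exp (2 * a s) + Real.exp (2 * b s)))
      (-2 * ηa * ((1 / 2) * ((x t - (r₀ + v * (t - t₀))) ^ 2 + (y t - v) ^ 2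
        + Real.exp (2 * a t) + Real.exp (2 * b t)))) t := by
  intro t ht
  have hr : HasDerivAt (fun s => r₀ + v * (s - t₀)) v t := by
    simpa using (((hasDerivAt_id t).sub_const t₀).const_mul v).const_add r₀
  refine hasDerivAt_energy_of_adaptive_laws (p := fun s => x s - (r₀ + v * (s - t₀)))
    (q := fun s => y s - v) ((hx t ht).sub hr) ((hy t ht).sub_const v) (ha t ht) ?_
  exact (hb t ht).congr_deriv (by ring)

/-- **Energy derivative identity for the adaptive scheme.**
Along any trajectory of the controlled HKB end-effector model with the given
adaptive laws, with the reference position affine in time with slope `v` on an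
interval `I`, the energy-like function
`E(t) = ½[(x−r̂)² + (y−v)² + e^{2a} + e^{2b}]` satisfies `E′(t) = −2 ηₐ E(t)`
for every `t ∈ I`, regardless of the choice of the continuous input `u`. -/
theorem adaptive_energy_derivative_identity
    (α β γ ω ηa v r₀ t₀ : ℝ) (I : Set ℝ)
    (u x y a b : ℝ → ℝ)
    (hu : ContinuousOn u I)
    (hx : ∀ t ∈ I, HasDerivAt x (y t) t)
    (hy : ∀ t ∈ I, HasDerivAt y
      (-(α * (y t) ^ 2 + β * (x t) ^ 2 - γ) * y t - ω ^ 2 * x t + u t) t)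
    (ha : ∀ t ∈ I, HasDerivAt a (-Real.exp (-2 * a t) *
      ((x t - (r₀ + v * (t - t₀))) * (y t - v)
        + ηa * (x t - (r₀ + v * (t - t₀))) ^ 2) - ηa) t)
    (hb : ∀ t ∈ I, HasDerivAt b (Real.exp (-2 * b t) * (y t - v) *
      (ω ^ 2 * x t + (α * (y t) ^ 2 + β * (x t) ^ 2 - γ) * y t
        - ηa * (y t - v) - u t) - ηa) t) :
    ∀ t ∈ I, HasDerivAt
      (fun s => (1 / 2) * ((x s - (r₀ + v * (s - t₀))) ^ 2 + (y s - v) ^ 2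
        + Real.exp (2 * a s) + Real.exp (2 * b s)))
      (-2 * ηa * ((1 / 2) * ((x t - (r₀ + v * (t - t₀))) ^ 2 + (y t - v) ^ 2
        + Real.exp (2 * a t) + Real.exp (2 * b t)))) t :=
  adaptive_energy_derivative_identity_general α β γ ω ηa v r₀ t₀ I u x y a b hx hy ha hb
end

section
/- Under the hypotheses of the adaptive control tracking theorem (gain condition η_a > (ln 2)/(2T)), the position error satisfies lim sup_{t→∞} |x(t) − r̂_p(t)| ≤ e^{η_a T}·√(2ε/(e^{2η_a T} − 2)); that is, the asymptotic tracking error bound is independent of the initial energy E(0). -/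
/-!
Along each sampling interval the reference is frozen to an affine function, and the energy
`E = (x - r̂ₚ)² + (y - r̂ᵥ)² + e^{2a} + e^{2b}` satisfies `Ė = -2ηₐ E` exactly: the adaptive laws
are designed to cancel every other term. At a sampling instant the reference jumps, and
`(u - v)² ≤ 2u² + 2v²` gives `E⁺ ≤ 2E⁻ + 2ε`. Hence the energies at the sampling instants obey
`Eₖ₊₁ ≤ 2e^{-2ηₐT} Eₖ + 2ε`, a contraction exactly when `ηₐ > (ln 2)/(2T)`, so
`limsup Eₖ ≤ 2ε / (1 - 2e^{-2ηₐT})` whatever `E₀` is, and `(x - r̂ₚ)² ≤ E`.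
-/

open Real Filter Set Topology

theorem eq_mul_exp_of_hasDerivAt_mul {f : ℝ → ℝ} {κ A B : ℝ} (hf : ContinuousOn f (Icc A B))
    (hf' : ∀ t ∈ Ioo A B, HasDerivAt f (κ * f t) t) :
    ∀ t ∈ Icc A B, f t = f A * exp (κ * (t - A)) := by
  set g : ℝ → ℝ := fun t => f t * exp (-(κ * (t - A)))
  have hg : ContinuousOn g (Icc A B) := hf.mul (by fun_prop)
  have hg' : ∀ t ∈ Ioo A B, HasDerivAt g 0 t := fun t ht => by
    have hexp : HasDerivAt (fun t => exp (-(κ * (t - A)))) (exp (-(κ * (t - A))) * -(κ * 1)) t :=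
      (((hasDerivAt_id t).sub_const A).const_mul κ).neg.exp
    exact ((hf' t ht).mul hexp).congr_deriv (by ring)
  intro t ht
  have hgt : g t = g A := by
    rcases ht.1.eq_or_lt with rfl | hAt
    · rfl
    obtain ⟨c, -, hc⟩ := exists_hasDerivAt_eq_slope g (fun _ => 0) hAt
      (hg.mono (Icc_subset_Icc_right ht.2)) fun s hs => hg' s ⟨hs.1, hs.2.trans_le ht.2⟩
    linarith [(div_eq_zero_iff.1 hc.symm).resolve_right (sub_ne_zero.2 hAt.ne')]
  simp only [g, sub_self, mul_zero, neg_zero, exp_zero, mul_one] at hgt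
  rw [← hgt, mul_assoc, ← exp_add, neg_add_cancel, exp_zero, mul_one]

theorem le_pow_mul_add_div_of_le_mul_add {u : ℕ → ℝ} {r c : ℝ} (hr : 0 ≤ r) (hr1 : r < 1)
    (hc : 0 ≤ c) (hu : ∀ k, u (k + 1) ≤ r * u k + c) (k : ℕ) :
    u k ≤ r ^ k * u 0 + c / (1 - r) := by
  have hfix : r * (c / (1 - r)) + c = c / (1 - r) := by
    field_simp [(sub_pos.2 hr1).ne']
    ring
  induction k with
  | zero => simpa using div_nonneg hc (sub_pos.2 hr1).le
  | succ k ih =>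
    calc u (k + 1) ≤ r * u k + c := hu k
      _ ≤ r * (r ^ k * u 0 + c / (1 - r)) + c := by gcongr
      _ = r ^ (k + 1) * u 0 + c / (1 - r) := by rw [pow_succ]; linear_combination hfix

theorem mem_Ico_floor_div_mul {T t : ℝ} (hT : 0 < T) (ht : 0 ≤ t) :
    t ∈ Ico ((⌊t / T⌋₊ : ℝ) * T) ((⌊t / T⌋₊ + 1) * T) := by
  constructor
  · exact (le_div_iff₀ hT).1 (Nat.floor_le (div_nonneg ht hT.le))
  · exact (div_lt_iff₀ hT).1 (Nat.lt_floor_add_one _)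

theorem limsup_abs_le_sqrt_of_le_pow_floor {f : ℝ → ℝ} {T r B L : ℝ} (hT : 0 < T) (hr : 0 ≤ r)
    (hr1 : r < 1) (hf : ∀ t, 0 ≤ t → |f t| ≤ √(r ^ ⌊t / T⌋₊ * B + L)) :
    limsup (fun t => |f t|) atTop ≤ √L := by
  have hfloor : Tendsto (fun t : ℝ => ⌊t / T⌋₊) atTop atTop :=
    tendsto_nat_floor_atTop.comp (tendsto_id.atTop_div_const hT)
  have hlim : Tendsto (fun t : ℝ => √(r ^ ⌊t / T⌋₊ * B + L)) atTop (𝓝 √L) := by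
    simpa using
      ((((tendsto_pow_atTop_nhds_zero_of_lt_one hr hr1).comp hfloor).mul_const B).add_const L).sqrt
  calc limsup (fun t => |f t|) atTop
      ≤ limsup (fun t : ℝ => √(r ^ ⌊t / T⌋₊ * B + L)) atTop :=
        limsup_le_limsup ((eventually_ge_atTop 0).mono hf)
          (isCoboundedUnder_le_of_le atTop fun t => abs_nonneg (f t)) hlim.isBoundedUnder_le
    _ = √L := hlim.limsup_eq

theorem two_mul_exp_neg_lt_one {T η : ℝ} (hT : 0 < T) (hη : η > log 2 / (2 * T)) :
    2 * exp (-(2 * η) * T) < 1 := by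
  have hlog : log 2 < 2 * η * T := by
    have := (div_lt_iff₀ (by positivity : (0 : ℝ) < 2 * T)).1 hη
    linarith
  rw [neg_mul, exp_neg, ← div_eq_mul_inv, div_lt_one (exp_pos _)]
  simpa [exp_log two_pos] using exp_lt_exp.2 hlog

theorem sqrt_div_one_sub_two_mul_exp_neg (c η T : ℝ) :
    √(c / (1 - 2 * exp (-(2 * η) * T))) = exp (η * T) * √(c / (exp (2 * η * T) - 2)) := by
  have hsq : exp (2 * η * T) = exp (η * T) ^ 2 := by rw [← exp_nat_mul]; ring_nf
  have hden : 1 - 2 * exp (-(2 * η) * T) = (exp (η * T) ^ 2 - 2) / exp (η * T) ^ 2 := by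
    rw [neg_mul, exp_neg, hsq]
    field_simp
  rw [hden, hsq, div_div_eq_mul_div, mul_div_right_comm, mul_comm,
    sqrt_mul (sq_nonneg _), sqrt_sq (exp_pos _).le]

theorem le_pow_mul_add_div_of_decay_of_jump {E : ℕ → ℝ → ℝ} {T κ ρ c : ℝ} (hT : 0 ≤ T)
    (hκ : 0 ≤ κ) (hρ : 0 ≤ ρ) (hρκ : ρ * exp (-κ * T) < 1) (hc : 0 ≤ c)
    (hE : ∀ k : ℕ, 0 ≤ E k (k * T))
    (hdecay : ∀ k : ℕ, ∀ t ∈ Icc ((k : ℝ) * T) ((k + 1) * T),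
      E k t = E k (k * T) * exp (-κ * (t - k * T)))
    (hjump : ∀ k : ℕ, E (k + 1) ((k + 1) * T) ≤ ρ * E k ((k + 1) * T) + c) (k : ℕ) :
    ∀ t ∈ Icc ((k : ℝ) * T) ((k + 1) * T),
      E k t ≤ (ρ * exp (-κ * T)) ^ k * E 0 0 + c / (1 - ρ * exp (-κ * T)) := by
  have hrec : ∀ k : ℕ, E (k + 1) ((k + 1 : ℕ) * T) ≤ ρ * exp (-κ * T) * E k (k * T) + c := by
    intro k
    have hend := hdecay k ((k + 1) * T) ⟨by linarith, le_rfl⟩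
    rw [show ((k : ℝ) + 1) * T - k * T = T by ring] at hend
    calc E (k + 1) ((k + 1 : ℕ) * T) ≤ ρ * E k ((k + 1) * T) + c := by exact_mod_cast hjump k
      _ = ρ * exp (-κ * T) * E k (k * T) + c := by rw [hend]; ring
  have hgeom := le_pow_mul_add_div_of_le_mul_add (u := fun k : ℕ => E k (k * T))
    (mul_nonneg hρ (exp_pos _).le) hρκ hc hrec k
  intro t ht
  have hexp : exp (-κ * (t - k * T)) ≤ 1 := exp_le_one_iff.2 (by nlinarith [ht.1])
  rw [hdecay k t ht]
  simp only [CharP.cast_eq_zero, zero_mul] at hgeom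
  nlinarith [hE k]

/-- The controlled HKB end-effector model with the adaptive laws of the coupling gains `a`, `b`,
at time `t`, tracking the reference position `r` and velocity `v`. -/
def HKBClosedLoopAt (α β γ ω Cp δ ηa : ℝ) (x y a b : ℝ → ℝ) (r v t : ℝ) : Prop :=
  HasDerivAt x (y t) t ∧
  HasDerivAt y (-(α * (y t) ^ 2 + β * (x t) ^ 2 - γ) * y t - ω ^ 2 * x t +
    ((a t + b t * (x t - r) ^ 2) * (y t - v) - Cp * exp (-δ * (y t - v) ^ 2) * (x t - r))) t ∧
  HasDerivAt a (-exp (-2 * a t) * ((x t - r) * (y t - v) + ηa * (x t - r) ^ 2) - ηa) t ∧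
  HasDerivAt b (exp (-2 * b t) * (y t - v) *
    (ω ^ 2 * x t + (α * (y t) ^ 2 + β * (x t) ^ 2 - γ) * y t - ηa * (y t - v)
      - ((a t + b t * (x t - r) ^ 2) * (y t - v)
        - Cp * exp (-δ * (y t - v) ^ 2) * (x t - r))) - ηa) t

/-- The Lyapunov energy for the reference `s ↦ p + c (s - s₀)` moving at constant velocity `c`. -/
noncomputable def trackingEnergy (x y a b : ℝ → ℝ) (p c s₀ s : ℝ) : ℝ :=
  (x s - (p + c * (s - s₀))) ^ 2 + (y s - c) ^ 2 + exp (2 * a s) + exp (2 * b s)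

section trackingEnergy

variable {x y a b : ℝ → ℝ} {p c s₀ : ℝ}

theorem trackingEnergy_nonneg (s : ℝ) : 0 ≤ trackingEnergy x y a b p c s₀ s := by
  unfold trackingEnergy
  positivity

theorem sq_sub_le_trackingEnergy (s : ℝ) :
    (x s - (p + c * (s - s₀))) ^ 2 ≤ trackingEnergy x y a b p c s₀ s := by
  unfold trackingEnergy
  nlinarith [sq_nonneg (y s - c), exp_pos (2 * a s), exp_pos (2 * b s)]

theorem continuousOn_trackingEnergy {S : Set ℝ} (hx : ContinuousOn x S) (hy : ContinuousOn y S)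
    (ha : ContinuousOn a S) (hb : ContinuousOn b S) :
    ContinuousOn (trackingEnergy x y a b p c s₀) S := by
  unfold trackingEnergy
  fun_prop

theorem hasDerivAt_trackingEnergy {α β γ ω Cp δ ηa t : ℝ}
    (h : HKBClosedLoopAt α β γ ω Cp δ ηa x y a b (p + c * (t - s₀)) c t) :
    HasDerivAt (trackingEnergy x y a b p c s₀) (-(2 * ηa) * trackingEnergy x y a b p c s₀ t) t := by
  obtain ⟨hx, hy, ha, hb⟩ := h
  have hr : HasDerivAt (fun s => p + c * (s - s₀)) c t := by
    simpa using (((hasDerivAt_id t).sub_const s₀).const_mul c).const_add p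
  refine ((((hx.sub hr).pow 2).add ((hy.sub_const c).pow 2)).add
    ((ha.const_mul 2).exp)).add ((hb.const_mul 2).exp) |>.congr_deriv ?_
  simp only [trackingEnergy, Pi.sub_apply]
  rw [show (-2 : ℝ) * a t = -(2 * a t) by ring, show (-2 : ℝ) * b t = -(2 * b t) by ring,
    exp_neg, exp_neg]
  field_simp
  ring

theorem trackingEnergy_jump (T c' : ℝ) :
    trackingEnergy x y a b (p + c' * T) c' (s₀ + T) (s₀ + T)
      ≤ 2 * trackingEnergy x y a b p c s₀ (s₀ + T) + 2 * ((T ^ 2 + 1) * (c' - c) ^ 2) := by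
  unfold trackingEnergy
  nlinarith [sq_nonneg (x (s₀ + T) - (p + c * T) + T * (c' - c)),
    sq_nonneg (y (s₀ + T) - c + (c' - c)), exp_pos (2 * a (s₀ + T)), exp_pos (2 * b (s₀ + T))]

theorem trackingEnergy_eq_mul_exp {α β γ ω Cp δ ηa B : ℝ}
    (hx : ContinuousOn x (Icc s₀ B)) (hy : ContinuousOn y (Icc s₀ B))
    (ha : ContinuousOn a (Icc s₀ B)) (hb : ContinuousOn b (Icc s₀ B))
    (h : ∀ t ∈ Ioo s₀ B, HKBClosedLoopAt α β γ ω Cp δ ηa x y a b (p + c * (t - s₀)) c t) :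
    ∀ t ∈ Icc s₀ B, trackingEnergy x y a b p c s₀ t
      = trackingEnergy x y a b p c s₀ s₀ * exp (-(2 * ηa) * (t - s₀)) :=
  eq_mul_exp_of_hasDerivAt_mul (continuousOn_trackingEnergy hx hy ha hb) fun t ht =>
    hasDerivAt_trackingEnergy (h t ht)

end trackingEnergy

theorem velocity_eq_of_mem_Ico {rp rv : ℝ → ℝ} {T v₀ : ℝ} (hT : 0 < T)
    (hrv0 : ∀ t ∈ Ico (0 : ℝ) T, rv t = v₀)
    (hrv : ∀ k : ℕ, 1 ≤ k → ∀ t ∈ Ico ((k : ℝ) * T) ((k + 1) * T),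
      rv t = (rp (k * T) - rp ((k - 1) * T)) / T) (k : ℕ) :
    ∀ t ∈ Ico ((k : ℝ) * T) ((k + 1) * T), rv t = rv (k * T) := by
  intro t ht
  have hk : (k : ℝ) * T ∈ Ico ((k : ℝ) * T) ((k + 1) * T) := left_mem_Ico.2 (by linarith)
  rcases Nat.eq_zero_or_pos k with rfl | hk1
  · simp only [CharP.cast_eq_zero, zero_mul, zero_add, one_mul] at ht hk ⊢
    rw [hrv0 t ht, hrv0 0 hk]
  · rw [hrv k hk1 t ht, hrv k hk1 _ hk]

theorem position_succ_eq_add_mul_velocity {rp rv : ℝ → ℝ} {T : ℝ} (hT : 0 < T)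
    (hrv : ∀ k : ℕ, 1 ≤ k → ∀ t ∈ Ico ((k : ℝ) * T) ((k + 1) * T),
      rv t = (rp (k * T) - rp ((k - 1) * T)) / T) (k : ℕ) :
    rp (k * T + T) = rp (k * T) + rv (k * T + T) * T := by
  have h := hrv (k + 1) k.succ_pos _ (left_mem_Ico.2 (by linarith))
  rw [show ((k + 1 : ℕ) : ℝ) * T = k * T + T by push_cast; ring,
    show ((k + 1 : ℕ) : ℝ) - 1 = k by push_cast; ring] at h
  rw [h]
  field_simp
  ring

/-- **Asymptotic adaptive control tracking bound.**
Under the adaptive control scheme for the HKB end-effector model with the gain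
condition `ηₐ > (ln 2)/(2T)`, the position error satisfies
`limsup_{t→∞} |x(t) − r̂ₚ(t)| ≤ e^{ηₐT} √(2ε/(e^{2ηₐT} − 2))`;
the asymptotic bound is independent of the initial energy `E(0)`. -/
theorem adaptive_control_asymptotic_tracking_bound
    (T α β γ ω Cp δ ηa v₀ : ℝ) (hT : 0 < T)
    (rp rv rphat x y a b : ℝ → ℝ)
    -- estimated velocity: constant v₀ on [0,T), finite difference afterwards
    (hrv0 : ∀ t ∈ Set.Ico (0 : ℝ) T, rv t = v₀)
    (hrv : ∀ k : ℕ, 1 ≤ k → ∀ t ∈ Set.Ico ((k : ℝ) * T) (((k : ℝ) + 1) * T),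
      rv t = (rp ((k : ℝ) * T) - rp (((k : ℝ) - 1) * T)) / T)
    -- predicted position
    (hrp : ∀ k : ℕ, ∀ t ∈ Set.Ico ((k : ℝ) * T) (((k : ℝ) + 1) * T),
      rphat t = rp ((k : ℝ) * T) + rv t * (t - (k : ℝ) * T))
    -- continuity of the state and adaptive parameters on [0,∞)
    (hxc : ContinuousOn x (Set.Ici 0)) (hyc : ContinuousOn y (Set.Ici 0))
    (hac : ContinuousOn a (Set.Ici 0)) (hbc : ContinuousOn b (Set.Ici 0))
    -- controlled HKB dynamics with the adaptive feedback controller and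
    -- adaptive laws for the coupling parameters, on each open sampling interval
    (hdyn : ∀ k : ℕ, ∀ t ∈ Set.Ioo ((k : ℝ) * T) (((k : ℝ) + 1) * T),
      HasDerivAt x (y t) t ∧
      HasDerivAt y (-(α * (y t) ^ 2 + β * (x t) ^ 2 - γ) * y t - ω ^ 2 * x t +
        ((a t + b t * (x t - rphat t) ^ 2) * (y t - rv t)
          - Cp * Real.exp (-δ * (y t - rv t) ^ 2) * (x t - rphat t))) t ∧
      HasDerivAt a (-Real.exp (-2 * a t) *
        ((x t - rphat t) * (y t - rv t) + ηa * (x t - rphat t) ^ 2) - ηa) t ∧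
      HasDerivAt b (Real.exp (-2 * b t) * (y t - rv t) *
        (ω ^ 2 * x t + (α * (y t) ^ 2 + β * (x t) ^ 2 - γ) * y t - ηa * (y t - rv t)
          - ((a t + b t * (x t - rphat t) ^ 2) * (y t - rv t)
            - Cp * Real.exp (-δ * (y t - rv t) ^ 2) * (x t - rphat t))) - ηa) t)
    (ε : ℝ)
    -- ε is the (finite) supremum of the sampling jump terms over k ≥ 1
    (hε : IsLUB (Set.range fun k : ℕ =>
      (T ^ 2 + 1) * (rv (((k : ℝ) + 1) * T) - rv ((k : ℝ) * T)) ^ 2) ε)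
    -- gain condition
    (hηa : ηa > Real.log 2 / (2 * T)) :
    Filter.limsup (fun t => |x t - rphat t|) Filter.atTop ≤
      Real.exp (ηa * T) * Real.sqrt (2 * ε / (Real.exp (2 * ηa * T) - 2)) := by
  have hηa0 : 0 < ηa := lt_trans (by positivity) hηa
  have hε0 : 0 ≤ ε := le_trans (by positivity) (hε.1 ⟨0, rfl⟩)
  have hrvk := velocity_eq_of_mem_Ico hT hrv0 hrv
  have hrphat : ∀ k : ℕ, ∀ t ∈ Ico ((k : ℝ) * T) ((k + 1) * T),
      rphat t = rp (k * T) + rv (k * T) * (t - k * T) := fun k t ht => by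
    rw [hrp k t ht, hrvk k t ht]
  set E : ℕ → ℝ → ℝ := fun k => trackingEnergy x y a b (rp (k * T)) (rv (k * T)) (k * T)
  have hdecay : ∀ k : ℕ, ∀ t ∈ Icc ((k : ℝ) * T) ((k + 1) * T),
      E k t = E k (k * T) * exp (-(2 * ηa) * (t - k * T)) := fun k => by
    have hpos : Icc ((k : ℝ) * T) ((k + 1) * T) ⊆ Ici 0 := fun s hs =>
      le_trans (by positivity) hs.1
    have hloop : ∀ t ∈ Ioo ((k : ℝ) * T) ((k + 1) * T), HKBClosedLoopAt α β γ ω Cp δ ηa x y a b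
        (rp (k * T) + rv (k * T) * (t - k * T)) (rv (k * T)) t := fun t ht => by
      have h : HKBClosedLoopAt α β γ ω Cp δ ηa x y a b (rphat t) (rv t) t := hdyn k t ht
      rwa [hrphat k t (Ioo_subset_Ico_self ht), hrvk k t (Ioo_subset_Ico_self ht)] at h
    exact trackingEnergy_eq_mul_exp (hxc.mono hpos) (hyc.mono hpos) (hac.mono hpos)
      (hbc.mono hpos) hloop
  have hjump : ∀ k : ℕ, E (k + 1) ((k + 1) * T) ≤ 2 * E k ((k + 1) * T) + 2 * ε := fun k => by
    have hεk : (T ^ 2 + 1) * (rv (k * T + T) - rv (k * T)) ^ 2 ≤ ε := by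
      simpa only [add_one_mul] using hε.1 ⟨k, rfl⟩
    simp only [E, Nat.cast_add, Nat.cast_one, add_one_mul,
      position_succ_eq_add_mul_velocity hT hrv k]
    linarith [trackingEnergy_jump (x := x) (y := y) (a := a) (b := b) (p := rp (k * T))
      (c := rv (k * T)) (s₀ := k * T) T (rv (k * T + T))]
  have hgain := two_mul_exp_neg_lt_one hT hηa
  have hbound := le_pow_mul_add_div_of_decay_of_jump hT.le (by positivity) zero_le_two hgain
    (by positivity) (fun k => trackingEnergy_nonneg _) hdecay hjump
  rw [← sqrt_div_one_sub_two_mul_exp_neg]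
  refine limsup_abs_le_sqrt_of_le_pow_floor (B := E 0 0) hT (by positivity) hgain fun t ht => ?_
  have hk := mem_Ico_floor_div_mul hT ht
  rw [hrphat _ t hk]
  exact abs_le_sqrt ((sq_sub_le_trackingEnergy t).trans (hbound _ t (Ico_subset_Icc_self hk)))
end

section
/- Let α, β, γ, ω > 0 and set V(x, y) = (ω² x² + y²)/2. If c₁ > 0 satisfies 2c₁·max(α/ω², β) ≤ γ, then every point with V(x, y) ≤ c₁ satisfies α x² + β y² ≤ γ, so the derivative of V along the HKB flow is nonnegative there; if c₂ > 0 satisfies 2c₂·min(α/ω², β) ≥ γ, then every point with V(x, y) ≥ c₂ satisfies α x² + β y² ≥ γ, so the derivative of V along the HKB flow is nonpositive there. Hence the annulus {(x, y) : c₁ ≤ V(x, y) ≤ c₂} is a trapping region for the flow whose boundary derivative signs point inward. -/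
/-!
Writing `α x² = (α/ω²)(ω² x²)` exhibits `α x² + β y²` as a combination of the two summands of
`2V = ω² x² + y²` with coefficients `α/ω²` and `β`, so it lies between `min(α/ω², β) · 2V` and
`max(α/ω², β) · 2V`. The sign of `V̇ = −(α x² + β y² − γ) y²` is then that of `γ − (α x² + β y²)`.
-/

section WeightedSum

variable {R : Type*} [Semiring R] [LinearOrder R] [IsOrderedRing R] {a b u v : R}

theorem add_mul_le_max_mul_add (hu : 0 ≤ u) (hv : 0 ≤ v) :
    a * u + b * v ≤ max a b * (u + v) := by
  rw [mul_add]
  exact add_le_add (mul_le_mul_of_nonneg_right (le_max_left a b) hu)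
    (mul_le_mul_of_nonneg_right (le_max_right a b) hv)

theorem min_mul_add_le_add_mul (hu : 0 ≤ u) (hv : 0 ≤ v) :
    min a b * (u + v) ≤ a * u + b * v := by
  rw [mul_add]
  exact add_le_add (mul_le_mul_of_nonneg_right (min_le_left a b) hu)
    (mul_le_mul_of_nonneg_right (min_le_right a b) hv)

end WeightedSum

section HKB

variable {α β ω : ℝ} (x y : ℝ)

theorem hkb_quadratic_eq (hω : ω ≠ 0) :
    α * x ^ 2 + β * y ^ 2 = α / ω ^ 2 * (ω ^ 2 * x ^ 2) + β * y ^ 2 := by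
  field_simp

theorem hkb_quadratic_le_max_mul_energy (hω : ω ≠ 0) :
    α * x ^ 2 + β * y ^ 2 ≤ max (α / ω ^ 2) β * (ω ^ 2 * x ^ 2 + y ^ 2) := by
  rw [hkb_quadratic_eq x y hω]
  exact add_mul_le_max_mul_add (by positivity) (sq_nonneg y)

theorem min_mul_energy_le_hkb_quadratic (hω : ω ≠ 0) :
    min (α / ω ^ 2) β * (ω ^ 2 * x ^ 2 + y ^ 2) ≤ α * x ^ 2 + β * y ^ 2 := by
  rw [hkb_quadratic_eq x y hω]
  exact min_mul_add_le_add_mul (by positivity) (sq_nonneg y)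

end HKB

theorem hkb_trapping_region_general (α β γ ω : ℝ)
    (hα : 0 < α) (hβ : 0 < β) (hω : 0 < ω) :
    (∀ c₁ : ℝ, 0 < c₁ → 2 * c₁ * max (α / ω ^ 2) β ≤ γ →
      ∀ x y : ℝ, (ω ^ 2 * x ^ 2 + y ^ 2) / 2 ≤ c₁ →
        α * x ^ 2 + β * y ^ 2 ≤ γ ∧
          0 ≤ -(α * x ^ 2 + β * y ^ 2 - γ) * y ^ 2) ∧
    (∀ c₂ : ℝ, 0 < c₂ → γ ≤ 2 * c₂ * min (α / ω ^ 2) β →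
      ∀ x y : ℝ, c₂ ≤ (ω ^ 2 * x ^ 2 + y ^ 2) / 2 →
        γ ≤ α * x ^ 2 + β * y ^ 2 ∧
          -(α * x ^ 2 + β * y ^ 2 - γ) * y ^ 2 ≤ 0) := by
  refine ⟨fun c₁ _ hc₁ x y hV => ?_, fun c₂ _ hc₂ x y hV => ?_⟩
  · have hquad : α * x ^ 2 + β * y ^ 2 ≤ γ :=
      calc α * x ^ 2 + β * y ^ 2
          ≤ max (α / ω ^ 2) β * (ω ^ 2 * x ^ 2 + y ^ 2) :=
            hkb_quadratic_le_max_mul_energy x y hω.ne'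
        _ ≤ max (α / ω ^ 2) β * (2 * c₁) :=
            mul_le_mul_of_nonneg_left (by linarith) (le_max_of_le_right hβ.le)
        _ ≤ γ := by linarith
    exact ⟨hquad, mul_nonneg (by linarith) (sq_nonneg y)⟩
  · have hquad : γ ≤ α * x ^ 2 + β * y ^ 2 :=
      calc γ ≤ min (α / ω ^ 2) β * (2 * c₂) := by linarith
        _ ≤ min (α / ω ^ 2) β * (ω ^ 2 * x ^ 2 + y ^ 2) :=
            mul_le_mul_of_nonneg_left (by linarith) (le_min (by positivity) hβ.le)
        _ ≤ α * x ^ 2 + β * y ^ 2 := min_mul_energy_le_hkb_quadratic x y hω.ne'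
    exact ⟨hquad, mul_nonpos_of_nonpos_of_nonneg (by linarith) (sq_nonneg y)⟩

/-- **Trapping annulus for the HKB oscillator.**
Let `α, β, γ, ω > 0` and `V(x,y) = (ω² x² + y²)/2`. If `c₁ > 0` satisfies
`2c₁ max(α/ω², β) ≤ γ`, then every point with `V(x,y) ≤ c₁` satisfies
`α x² + β y² ≤ γ`, so the derivative `−(α x² + β y² − γ) y²` of `V` along
the HKB flow is nonnegative there; if `c₂ > 0` satisfies
`2c₂ min(α/ω², β) ≥ γ`, then every point with `V(x,y) ≥ c₂` satisfies
`α x² + β y² ≥ γ`, so that derivative is nonpositive there. Hence the annulus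
`{c₁ ≤ V ≤ c₂}` is a trapping region whose boundary derivative signs point
inward. -/
theorem hkb_trapping_region (α β γ ω : ℝ)
    (hα : 0 < α) (hβ : 0 < β) (hγ : 0 < γ) (hω : 0 < ω) :
    (∀ c₁ : ℝ, 0 < c₁ → 2 * c₁ * max (α / ω ^ 2) β ≤ γ →
      ∀ x y : ℝ, (ω ^ 2 * x ^ 2 + y ^ 2) / 2 ≤ c₁ →
        α * x ^ 2 + β * y ^ 2 ≤ γ ∧
          0 ≤ -(α * x ^ 2 + β * y ^ 2 - γ) * y ^ 2) ∧
    (∀ c₂ : ℝ, 0 < c₂ → γ ≤ 2 * c₂ * min (α / ω ^ 2) β →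
      ∀ x y : ℝ, c₂ ≤ (ω ^ 2 * x ^ 2 + y ^ 2) / 2 →
        γ ≤ α * x ^ 2 + β * y ^ 2 ∧
          -(α * x ^ 2 + β * y ^ 2 - γ) * y ^ 2 ≤ 0) :=
  hkb_trapping_region_general α β γ ω hα hβ hω
end

section
/- Let α, β, γ, ω > 0 and let (x, y) be any solution of the uncontrolled HKB oscillator on [0, ∞). Then for all t ≥ 0, V(x(t), y(t)) ≤ max( V(x(0), y(0)), γ/(2·min(α/ω², β)) ), where V(x, y) = (ω² x² + y²)/2; in particular every forward solution of the uncontrolled HKB oscillator is bounded. -/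
/-!
Along a solution the energy `V = (ω²x² + y²)/2` satisfies `V̇ = -(αx² + βy² - γ)y²`, and
`αx² + βy² ≥ 2 min(α/ω², β) V`. So `V` cannot increase while `V ≥ γ / (2 min(α/ω², β))`, and
therefore never exceeds the larger of its initial value and this threshold.
-/

theorem le_of_deriv_nonpos_of_le_self {f f' : ℝ → ℝ} {a M : ℝ}
    (hf : ∀ t ≥ a, HasDerivAt f (f' t) t) (ha : f a ≤ M)
    (hM : ∀ t ≥ a, M ≤ f t → f' t ≤ 0) {t : ℝ} (ht : a ≤ t) : f t ≤ M := by
  -- The bound on `f'` is not strict, so fence `f` by the strict supersolutions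
  -- `M + ε (1 + s - a)`, then let `ε → 0`.
  have fence : ∀ ε > 0, f t ≤ M + ε * (1 + (t - a)) := fun ε hε =>
    image_le_of_deriv_right_lt_deriv_boundary' (B := fun s => M + ε * (1 + (s - a)))
      (fun s hs => (hf s hs.1).continuousAt.continuousWithinAt)
      (fun s hs => (hf s hs.1).hasDerivWithinAt) (by simp; linarith) (by fun_prop)
      (fun s _ => ((((hasDerivAt_id s).sub_const a).const_add 1).const_mul ε
        |>.const_add M).hasDerivWithinAt.congr_deriv (by simp))
      (fun s hs hfs => (hM s hs.1 (by rw [hfs]; nlinarith [hs.1])).trans_lt hε)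
      ⟨ht, le_rfl⟩
  refine le_of_forall_pos_le_add fun ε hε => ?_
  have hpos : 0 < 1 + (t - a) := by linarith
  simpa [div_mul_cancel₀ ε hpos.ne'] using fence (ε / (1 + (t - a))) (div_pos hε hpos)

noncomputable def hkbEnergy (ω x y : ℝ) : ℝ := (ω ^ 2 * x ^ 2 + y ^ 2) / 2

theorem hasDerivAt_hkbEnergy {x y : ℝ → ℝ} {x' y' t : ℝ} (ω : ℝ)
    (hx : HasDerivAt x x' t) (hy : HasDerivAt y y' t) :
    HasDerivAt (fun s => hkbEnergy ω (x s) (y s)) (ω ^ 2 * x t * x' + y t * y') t :=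
  (((hx.pow 2).const_mul (ω ^ 2)).add (hy.pow 2)).div_const 2 |>.congr_deriv (by push_cast; ring)

theorem min_mul_two_hkbEnergy_le {α β ω : ℝ} (hω : ω ≠ 0) (x y : ℝ) :
    min (α / ω ^ 2) β * (2 * hkbEnergy ω x y) ≤ α * x ^ 2 + β * y ^ 2 := by
  have hx : min (α / ω ^ 2) β * (ω ^ 2 * x ^ 2) ≤ α * x ^ 2 :=
    calc min (α / ω ^ 2) β * (ω ^ 2 * x ^ 2) ≤ α / ω ^ 2 * (ω ^ 2 * x ^ 2) := by
          gcongr; exact min_le_left _ _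
      _ = α * x ^ 2 := by field_simp
  have hy : min (α / ω ^ 2) β * y ^ 2 ≤ β * y ^ 2 := by gcongr; exact min_le_right _ _
  unfold hkbEnergy
  linarith

theorem hkb_dissipation_nonpos {α β γ ω x y : ℝ} (hα : 0 < α) (hβ : 0 < β) (hω : ω ≠ 0)
    (hV : γ / (2 * min (α / ω ^ 2) β) ≤ hkbEnergy ω x y) :
    -(α * x ^ 2 + β * y ^ 2 - γ) * y ^ 2 ≤ 0 := by
  have hm : 0 < min (α / ω ^ 2) β := lt_min (by positivity) hβ
  have hγ : γ ≤ α * x ^ 2 + β * y ^ 2 := calc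
    γ ≤ min (α / ω ^ 2) β * (2 * hkbEnergy ω x y) := by
      rw [div_le_iff₀ (by positivity)] at hV; linarith
    _ ≤ α * x ^ 2 + β * y ^ 2 := min_mul_two_hkbEnergy_le hω x y
  nlinarith [sq_nonneg y]

theorem hkb_forward_solutions_bounded_general (α β γ ω : ℝ)
    (hα : 0 < α) (hβ : 0 < β) (hω : 0 < ω)
    (x y : ℝ → ℝ)
    (hx : ∀ t ∈ Set.Ici (0 : ℝ), HasDerivAt x (y t) t)
    (hy : ∀ t ∈ Set.Ici (0 : ℝ), HasDerivAt y
      (-(α * (x t) ^ 2 + β * (y t) ^ 2 - γ) * y t - ω ^ 2 * x t) t) :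
    ∀ t ≥ (0 : ℝ), (ω ^ 2 * (x t) ^ 2 + (y t) ^ 2) / 2 ≤
      max ((ω ^ 2 * (x 0) ^ 2 + (y 0) ^ 2) / 2)
        (γ / (2 * min (α / ω ^ 2) β)) := fun _ ht =>
  le_of_deriv_nonpos_of_le_self (f := fun s => hkbEnergy ω (x s) (y s))
    (f' := fun s => -(α * x s ^ 2 + β * y s ^ 2 - γ) * y s ^ 2)
    (fun s hs => (hasDerivAt_hkbEnergy ω (hx s hs) (hy s hs)).congr_deriv (by ring))
    (le_max_left _ _)
    (fun _ _ hs => hkb_dissipation_nonpos hα hβ hω.ne' ((le_max_right _ _).trans hs)) ht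

/-- **Forward boundedness of solutions of the HKB oscillator.**
Let `α, β, γ, ω > 0` and let `(x, y)` be any solution of the uncontrolled HKB
oscillator on `[0, ∞)`. Then for all `t ≥ 0`,
`V(x(t), y(t)) ≤ max(V(x(0), y(0)), γ/(2 min(α/ω², β)))`, where
`V(x, y) = (ω² x² + y²)/2`; in particular every forward solution is bounded. -/
theorem hkb_forward_solutions_bounded (α β γ ω : ℝ)
    (hα : 0 < α) (hβ : 0 < β) (hγ : 0 < γ) (hω : 0 < ω)
    (x y : ℝ → ℝ)
    (hx : ∀ t ∈ Set.Ici (0 : ℝ), HasDerivAt x (y t) t)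
    (hy : ∀ t ∈ Set.Ici (0 : ℝ), HasDerivAt y
      (-(α * (x t) ^ 2 + β * (y t) ^ 2 - γ) * y t - ω ^ 2 * x t) t) :
    ∀ t ≥ (0 : ℝ), (ω ^ 2 * (x t) ^ 2 + (y t) ^ 2) / 2 ≤
      max ((ω ^ 2 * (x 0) ^ 2 + (y 0) ^ 2) / 2)
        (γ / (2 * min (α / ω ^ 2) β)) :=
  hkb_forward_solutions_bounded_general α β γ ω hα hβ hω x y hx hy
end

section
/- With the explicit collocation approximation x̃(t) = x_k + y_k (t − t_k) + (𝒩/𝒟)(t − t_k)² of the optimal trajectory on [t_k, t_{k+1}] (T = t_{k+1} − t_k), the terminal tracking error satisfies |x̃(t_{k+1}) − r̂| = |x_k + T y_k + (𝒩/𝒟) T² − r̂| ≤ T²(1 − θ_p)·|2(x_k − r̂) + T(s_k + s_{k+1})| / |𝒟| + η_m·|ℒ·ℳ| / |𝒟|. In particular, the bound on the tracking error tends to 0 as θ_p → 1 and η_m → 0. -/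
/-! Clearing the denominator, `𝒟 (x_k + T y_k − r̂) + 𝒩 T²` collapses to
`T² θ_σ (2(x_k − r̂) + T(s_k + s_{k+1})) + η_m ℒ ℳ`: the `θ_p`-terms cancel and the
`η_m ℒ`-terms assemble into `ℳ`. The triangle inequality gives the bound, and at
`(θ_p, η_m) = (1, 0)` both numerators vanish while `𝒟 = 2T³ ≠ 0`, so the bound is continuous
there with value `0`. -/

open Filter Topology

lemma abs_mul_add_mul_div_le {a b u v d : ℝ} (ha : 0 ≤ a) (hb : 0 ≤ b) :
    |a * u + b * v| / |d| ≤ a * |u| / |d| + b * |v| / |d| := by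
  have h : |a * u + b * v| ≤ a * |u| + b * |v| := by
    calc |a * u + b * v| ≤ |a * u| + |b * v| := abs_add_le _ _
      _ = a * |u| + b * |v| := by rw [abs_mul, abs_mul, abs_of_nonneg ha, abs_of_nonneg hb]
  rw [← add_div]
  exact div_le_div_of_nonneg_right h (abs_nonneg d)

lemma collocation_terminal_error_eq {α β γ ω T ηm θp xk yk rhat sk sk1 L M D N : ℝ}
    (hM : M = 2 * (xk + T * yk - rhat)
      - T ^ 2 * (yk * (α * xk ^ 2 + β * yk ^ 2 - γ) + ω ^ 2 * xk))
    (hD : D = 2 * T ^ 2 * (θp * T + (1 - θp)) + 2 * ηm * L) (hD0 : D ≠ 0)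
    (hN : N = 2 * T * (((sk + sk1) / 2 - yk) * (1 - θp) + (rhat - xk - T * yk) * θp)
      - ηm * L * ((α * xk ^ 2 + β * yk ^ 2 - γ) * yk + ω ^ 2 * xk)) :
    xk + T * yk + (N / D) * T ^ 2 - rhat =
      (T ^ 2 * (1 - θp) * (2 * (xk - rhat) + T * (sk + sk1)) + ηm * (L * M)) / D := by
  rw [eq_div_iff hD0, add_sub_right_comm, add_mul, div_mul_eq_mul_div, div_mul_cancel₀ _ hD0,
    hM, hN, hD]
  ring

lemma tendsto_collocation_error_bound {T L c e : ℝ} (hT : T ≠ 0) :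
    Tendsto (fun p : ℝ × ℝ =>
        T ^ 2 * (1 - p.1) * c / |2 * T ^ 2 * (p.1 * T + (1 - p.1)) + 2 * p.2 * L|
          + p.2 * e / |2 * T ^ 2 * (p.1 * T + (1 - p.1)) + 2 * p.2 * L|)
      (𝓝 (1, 0)) (𝓝 0) := by
  have hD : |2 * T ^ 2 * ((1 : ℝ) * T + (1 - 1)) + 2 * 0 * L| ≠ 0 := by
    simpa using hT
  have hcont : ContinuousAt (fun p : ℝ × ℝ =>
      T ^ 2 * (1 - p.1) * c / |2 * T ^ 2 * (p.1 * T + (1 - p.1)) + 2 * p.2 * L|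
        + p.2 * e / |2 * T ^ 2 * (p.1 * T + (1 - p.1)) + 2 * p.2 * L|) (1, 0) := by
    apply ContinuousAt.add <;> exact ContinuousAt.div (by fun_prop) (by fun_prop) hD
  simpa using hcont.tendsto

theorem collocation_terminal_position_error_bound_general
    (α β γ ω T ηm θp θσ xk yk rhat sk sk1 L M D N : ℝ)
    (hT : 0 < T) (hηm : 0 < ηm)
    (hθp1 : θp ≤ 1) (hθσ : θσ = 1 - θp)
    (hM : M = 2 * (xk + T * yk - rhat)
      - T ^ 2 * (yk * (α * xk ^ 2 + β * yk ^ 2 - γ) + ω ^ 2 * xk))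
    (hD : D = 2 * T ^ 2 * (θp * T + θσ) + 2 * ηm * L) (hD0 : D ≠ 0)
    (hN : N = 2 * T * (((sk + sk1) / 2 - yk) * θσ + (rhat - xk - T * yk) * θp)
      - ηm * L * ((α * xk ^ 2 + β * yk ^ 2 - γ) * yk + ω ^ 2 * xk)) :
    |xk + T * yk + (N / D) * T ^ 2 - rhat| ≤
        T ^ 2 * (1 - θp) * |2 * (xk - rhat) + T * (sk + sk1)| / |D|
          + ηm * |L * M| / |D| ∧
      Filter.Tendsto (fun p : ℝ × ℝ =>
        T ^ 2 * (1 - p.1) * |2 * (xk - rhat) + T * (sk + sk1)| /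
            |2 * T ^ 2 * (p.1 * T + (1 - p.1)) + 2 * p.2 * L|
          + p.2 * |L * M| /
            |2 * T ^ 2 * (p.1 * T + (1 - p.1)) + 2 * p.2 * L|)
        (nhds (1, 0)) (nhds 0) := by
  subst hθσ
  refine ⟨?_, tendsto_collocation_error_bound hT.ne'⟩
  rw [collocation_terminal_error_eq hM hD hD0 hN, abs_div]
  exact abs_mul_add_mul_div_le (mul_nonneg (sq_nonneg T) (sub_nonneg.mpr hθp1)) hηm.le

/-- **Collocation bound on the terminal tracking (position) error.**
With the explicit collocation approximation
`x̃(t) = x_k + y_k (t − t_k) + (𝒩/𝒟)(t − t_k)²` of the optimal trajectory on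
`[t_k, t_k + T]`, the terminal tracking error satisfies
`|x̃(t_{k+1}) − r̂| = |x_k + T y_k + (𝒩/𝒟) T² − r̂|
  ≤ T²(1 − θₚ)|2(x_k − r̂) + T(s_k + s_{k+1})|/|𝒟| + ηₘ |ℒ ℳ|/|𝒟|`.
In particular, the bound on the tracking error tends to `0` as `θₚ → 1` and
`ηₘ → 0`. -/
theorem collocation_terminal_position_error_bound
    (α β γ ω T ηm θp θσ xk yk rhat sk sk1 L M D N : ℝ)
    (hT : 0 < T) (hηm : 0 < ηm)
    (hθp0 : 0 ≤ θp) (hθp1 : θp ≤ 1) (hθσ : θσ = 1 - θp)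
    (hL : L = T ^ 2 * ω ^ 2 / 2 + α * T ^ 2 * xk * yk + α * T * xk ^ 2
      + 3 * β * T * yk ^ 2 - γ * T + 2)
    (hM : M = 2 * (xk + T * yk - rhat)
      - T ^ 2 * (yk * (α * xk ^ 2 + β * yk ^ 2 - γ) + ω ^ 2 * xk))
    (hD : D = 2 * T ^ 2 * (θp * T + θσ) + 2 * ηm * L) (hD0 : D ≠ 0)
    (hN : N = 2 * T * (((sk + sk1) / 2 - yk) * θσ + (rhat - xk - T * yk) * θp)
      - ηm * L * ((α * xk ^ 2 + β * yk ^ 2 - γ) * yk + ω ^ 2 * xk)) :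
    |xk + T * yk + (N / D) * T ^ 2 - rhat| ≤
        T ^ 2 * (1 - θp) * |2 * (xk - rhat) + T * (sk + sk1)| / |D|
          + ηm * |L * M| / |D| ∧
      Filter.Tendsto (fun p : ℝ × ℝ =>
        T ^ 2 * (1 - p.1) * |2 * (xk - rhat) + T * (sk + sk1)| /
            |2 * T ^ 2 * (p.1 * T + (1 - p.1)) + 2 * p.2 * L|
          + p.2 * |L * M| /
            |2 * T ^ 2 * (p.1 * T + (1 - p.1)) + 2 * p.2 * L|)
        (nhds (1, 0)) (nhds 0) :=
  collocation_terminal_position_error_bound_general α β γ ω T ηm θp θσ xk yk rhat sk sk1 L M D N hT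
    hηm hθp1 hθσ hM hD hD0 hN
end

section
/- With the explicit collocation approximation x̃(t) = x_k + y_k (t − t_k) + (𝒩/𝒟)(t − t_k)² of the optimal trajectory on [t_k, t_{k+1}] (T = t_{k+1} − t_k), the terminal velocity error satisfies |x̃′(t_{k+1}) − s_{k+1}| = |y_k + 2𝒩T/𝒟 − s_{k+1}| ≤ (1 − θ_σ)·2T²·|T(y_k − s_{k+1}) + 2(r̂ − x_k − T y_k)| / |𝒟| + θ_σ·2T²·|s_k − y_k| / |𝒟| + 2η_m·|ℒ·𝒫| / |𝒟|, where 𝒫 = y_k − s_{k+1} − T[(α x_k² + β y_k² − γ) y_k + ω² x_k]. In particular, the bound on the velocity error tends to 0 as θ_σ → 1, η_m → 0 and s_k = y_k. -/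
/-!
Eliminating `𝒩` and `𝒟`, the velocity error is a single fraction over `𝒟` whose numerator is
`θp·2T²·(T(y_k − s_{k+1}) + 2(r̂ − x_k − T y_k)) + θσ·2T²·(s_k − y_k) + 2ηₘ·ℒ·𝒫`:
the `ℒ`-terms of `(y_k − s_{k+1})𝒟` and `2𝒩T` combine to `2ηₘℒ𝒫`.
The bound is the triangle inequality for this numerator, whose three weights are nonnegative.
As a function of `(θσ, ηₘ)` the bound is continuous at `(1, 0)`, where the denominator is
`2T² ≠ 0`, and it vanishes there once `s_k = y_k`.
-/

lemma abs_weighted_add_three_le {a b c x y z : ℝ} (ha : 0 ≤ a) (hb : 0 ≤ b) (hc : 0 ≤ c) :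
    |a * x + b * y + c * z| ≤ a * |x| + b * |y| + c * |z| :=
  calc |a * x + b * y + c * z| ≤ |a * x| + |b * y| + |c * z| := abs_add_three _ _ _
    _ = a * |x| + b * |y| + c * |z| := by
      rw [abs_mul, abs_mul, abs_mul, abs_of_nonneg ha, abs_of_nonneg hb, abs_of_nonneg hc]

section TerminalVelocity

variable {α β γ ω T ηm θp θσ xk yk rhat sk sk1 L D N P : ℝ}

lemma terminal_velocity_error_eq
    (hD : D = 2 * T ^ 2 * (θp * T + θσ) + 2 * ηm * L) (hD0 : D ≠ 0)
    (hN : N = 2 * T * (((sk + sk1) / 2 - yk) * θσ + (rhat - xk - T * yk) * θp)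
      - ηm * L * ((α * xk ^ 2 + β * yk ^ 2 - γ) * yk + ω ^ 2 * xk))
    (hP : P = yk - sk1 - T * ((α * xk ^ 2 + β * yk ^ 2 - γ) * yk + ω ^ 2 * xk)) :
    yk + 2 * N * T / D - sk1 =
      (θp * (2 * T ^ 2) * (T * (yk - sk1) + 2 * (rhat - xk - T * yk))
        + θσ * (2 * T ^ 2) * (sk - yk) + 2 * ηm * (L * P)) / D := by
  rw [eq_div_iff hD0, sub_mul, add_mul, div_mul_cancel₀ _ hD0, hD, hN, hP]
  ring

lemma abs_terminal_velocity_error_le (hηm : 0 < ηm) (hθp0 : 0 ≤ θp) (hθp1 : θp ≤ 1)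
    (hθσ : θσ = 1 - θp)
    (hD : D = 2 * T ^ 2 * (θp * T + θσ) + 2 * ηm * L) (hD0 : D ≠ 0)
    (hN : N = 2 * T * (((sk + sk1) / 2 - yk) * θσ + (rhat - xk - T * yk) * θp)
      - ηm * L * ((α * xk ^ 2 + β * yk ^ 2 - γ) * yk + ω ^ 2 * xk))
    (hP : P = yk - sk1 - T * ((α * xk ^ 2 + β * yk ^ 2 - γ) * yk + ω ^ 2 * xk)) :
    |yk + 2 * N * T / D - sk1| ≤
      (1 - θσ) * (2 * T ^ 2) * |T * (yk - sk1) + 2 * (rhat - xk - T * yk)| / |D|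
        + θσ * (2 * T ^ 2) * |sk - yk| / |D| + 2 * ηm * |L * P| / |D| := by
  have hθp : 1 - θσ = θp := by rw [hθσ]; ring
  rw [terminal_velocity_error_eq hD hD0 hN hP, abs_div, hθp, ← add_div, ← add_div]
  gcongr
  exact abs_weighted_add_three_le (by positivity) (by rw [hθσ]; nlinarith) (by positivity)

lemma tendsto_terminal_velocity_error_bound (hT : 0 < T) :
    Filter.Tendsto (fun p : ℝ × ℝ =>
      (1 - p.1) * (2 * T ^ 2) * |T * (yk - sk1) + 2 * (rhat - xk - T * yk)| /
          |2 * T ^ 2 * ((1 - p.1) * T + p.1) + 2 * p.2 * L|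
        + p.1 * (2 * T ^ 2) * |yk - yk| /
          |2 * T ^ 2 * ((1 - p.1) * T + p.1) + 2 * p.2 * L|
        + 2 * p.2 * |L * P| / |2 * T ^ 2 * ((1 - p.1) * T + p.1) + 2 * p.2 * L|)
      (nhds (1, 0)) (nhds 0) := by
  have hden : |2 * T ^ 2 * ((1 - (1 : ℝ)) * T + 1) + 2 * 0 * L| ≠ 0 := by
    norm_num
    exact hT.ne'
  have hcont : ContinuousAt (fun p : ℝ × ℝ =>
      (1 - p.1) * (2 * T ^ 2) * |T * (yk - sk1) + 2 * (rhat - xk - T * yk)| /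
          |2 * T ^ 2 * ((1 - p.1) * T + p.1) + 2 * p.2 * L|
        + p.1 * (2 * T ^ 2) * |yk - yk| /
          |2 * T ^ 2 * ((1 - p.1) * T + p.1) + 2 * p.2 * L|
        + 2 * p.2 * |L * P| / |2 * T ^ 2 * ((1 - p.1) * T + p.1) + 2 * p.2 * L|)
      (1, 0) := by
    fun_prop (disch := exact hden)
  simpa using hcont.tendsto

end TerminalVelocity

theorem collocation_terminal_velocity_error_bound_general
    (α β γ ω T ηm θp θσ xk yk rhat sk sk1 L D N P : ℝ)
    (hT : 0 < T) (hηm : 0 < ηm)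
    (hθp0 : 0 ≤ θp) (hθp1 : θp ≤ 1) (hθσ : θσ = 1 - θp)
    (hD : D = 2 * T ^ 2 * (θp * T + θσ) + 2 * ηm * L) (hD0 : D ≠ 0)
    (hN : N = 2 * T * (((sk + sk1) / 2 - yk) * θσ + (rhat - xk - T * yk) * θp)
      - ηm * L * ((α * xk ^ 2 + β * yk ^ 2 - γ) * yk + ω ^ 2 * xk))
    (hP : P = yk - sk1
      - T * ((α * xk ^ 2 + β * yk ^ 2 - γ) * yk + ω ^ 2 * xk)) :
    |yk + 2 * N * T / D - sk1| ≤
        (1 - θσ) * (2 * T ^ 2)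
            * |T * (yk - sk1) + 2 * (rhat - xk - T * yk)| / |D|
          + θσ * (2 * T ^ 2) * |sk - yk| / |D|
          + 2 * ηm * |L * P| / |D| ∧
      (sk = yk →
        Filter.Tendsto (fun p : ℝ × ℝ =>
          (1 - p.1) * (2 * T ^ 2)
              * |T * (yk - sk1) + 2 * (rhat - xk - T * yk)| /
              |2 * T ^ 2 * ((1 - p.1) * T + p.1) + 2 * p.2 * L|
            + p.1 * (2 * T ^ 2) * |sk - yk| /
              |2 * T ^ 2 * ((1 - p.1) * T + p.1) + 2 * p.2 * L|
            + 2 * p.2 * |L * P| /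
              |2 * T ^ 2 * ((1 - p.1) * T + p.1) + 2 * p.2 * L|)
          (nhds (1, 0)) (nhds 0)) := by
  refine ⟨abs_terminal_velocity_error_le hηm hθp0 hθp1 hθσ hD hD0 hN hP, ?_⟩
  rintro rfl
  exact tendsto_terminal_velocity_error_bound hT

/-- **Collocation bound on the terminal velocity error.**
With the explicit collocation approximation
`x̃(t) = x_k + y_k (t − t_k) + (𝒩/𝒟)(t − t_k)²` of the optimal trajectory on
`[t_k, t_k + T]`, the terminal velocity error satisfies
`|x̃′(t_{k+1}) − s_{k+1}| = |y_k + 2𝒩T/𝒟 − s_{k+1}|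
  ≤ (1 − θσ) 2T² |T(y_k − s_{k+1}) + 2(r̂ − x_k − T y_k)|/|𝒟|
    + θσ 2T² |s_k − y_k|/|𝒟| + 2ηₘ |ℒ 𝒫|/|𝒟|`,
where `𝒫 = y_k − s_{k+1} − T[(α x_k² + β y_k² − γ) y_k + ω² x_k]`.
In particular, the bound on the velocity error tends to `0` as `θσ → 1`,
`ηₘ → 0` and `s_k = y_k`. -/
theorem collocation_terminal_velocity_error_bound
    (α β γ ω T ηm θp θσ xk yk rhat sk sk1 L D N P : ℝ)
    (hT : 0 < T) (hηm : 0 < ηm)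
    (hθp0 : 0 ≤ θp) (hθp1 : θp ≤ 1) (hθσ : θσ = 1 - θp)
    (hL : L = T ^ 2 * ω ^ 2 / 2 + α * T ^ 2 * xk * yk + α * T * xk ^ 2
      + 3 * β * T * yk ^ 2 - γ * T + 2)
    (hD : D = 2 * T ^ 2 * (θp * T + θσ) + 2 * ηm * L) (hD0 : D ≠ 0)
    (hN : N = 2 * T * (((sk + sk1) / 2 - yk) * θσ + (rhat - xk - T * yk) * θp)
      - ηm * L * ((α * xk ^ 2 + β * yk ^ 2 - γ) * yk + ω ^ 2 * xk))
    (hP : P = yk - sk1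
      - T * ((α * xk ^ 2 + β * yk ^ 2 - γ) * yk + ω ^ 2 * xk)) :
    |yk + 2 * N * T / D - sk1| ≤
        (1 - θσ) * (2 * T ^ 2)
            * |T * (yk - sk1) + 2 * (rhat - xk - T * yk)| / |D|
          + θσ * (2 * T ^ 2) * |sk - yk| / |D|
          + 2 * ηm * |L * P| / |D| ∧
      (sk = yk →
        Filter.Tendsto (fun p : ℝ × ℝ =>
          (1 - p.1) * (2 * T ^ 2)
              * |T * (yk - sk1) + 2 * (rhat - xk - T * yk)| /
              |2 * T ^ 2 * ((1 - p.1) * T + p.1) + 2 * p.2 * L|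
            + p.1 * (2 * T ^ 2) * |sk - yk| /
              |2 * T ^ 2 * ((1 - p.1) * T + p.1) + 2 * p.2 * L|
            + 2 * p.2 * |L * P| /
              |2 * T ^ 2 * ((1 - p.1) * T + p.1) + 2 * p.2 * L|)
          (nhds (1, 0)) (nhds 0)) :=
  collocation_terminal_velocity_error_bound_general α β γ ω T ηm θp θσ xk yk rhat sk sk1 L D N P hT
    hηm hθp0 hθp1 hθσ hD hD0 hN hP
end
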